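/- On 𝐇_1 × ℂ with coordinates τ = x+iy ∈ 𝐇_1, z = u+iv ∈ ℂ, the operators D = y²(∂²/∂x² + ∂²/∂y²) + v²(∂²/∂u² + ∂²/∂v²) + 2yv(∂²/∂x∂u + ∂²/∂y∂v) and Ψ = y(∂²/∂u² + ∂²/∂v²) satisfy the commutator identity DΨ − ΨD = 2y² (∂/∂y)(∂²/∂u² − ∂²/∂v²) − 4y² ∂³/∂x∂u∂v − 2(v (∂/∂v)Ψ + Ψ), as an identity of differential operators applied to every smooth function f : 𝐇_1 × ℂ → ℂ. -/

import Mathlib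

/- STATEMENT 10: The commutator identity
DΨ − ΨD = 2y² (∂/∂y)(∂²/∂u² − ∂²/∂v²) − 4y² ∂³/∂x∂u∂v − 2(v (∂/∂v)Ψ + Ψ)
on 𝐇₁ × ℂ. -/

noncomputable section
open Complex

/-- Real coordinate vector fields on 𝐇₁ × ℂ ⊆ ℂ × ℂ, where τ = x+iy, z = u+iv. -/
def px (f : ℂ × ℂ → ℂ) (p : ℂ × ℂ) : ℂ := fderiv ℝ f p (1, 0)
def py (f : ℂ × ℂ → ℂ) (p : ℂ × ℂ) : ℂ := fderiv ℝ f p (Complex.I, 0)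
def pu (f : ℂ × ℂ → ℂ) (p : ℂ × ℂ) : ℂ := fderiv ℝ f p (0, 1)
def pv (f : ℂ × ℂ → ℂ) (p : ℂ × ℂ) : ℂ := fderiv ℝ f p (0, Complex.I)

/-- D = y²(∂²/∂x² + ∂²/∂y²) + v²(∂²/∂u² + ∂²/∂v²) + 2yv(∂²/∂x∂u + ∂²/∂y∂v). -/
def Dop (f : ℂ × ℂ → ℂ) (p : ℂ × ℂ) : ℂ :=
  ((p.1.im : ℂ))^2 * (px (px f) p + py (py f) p)
  + ((p.2.im : ℂ))^2 * (pu (pu f) p + pv (pv f) p)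
  + 2 * (p.1.im : ℂ) * (p.2.im : ℂ) * (px (pu f) p + py (pv f) p)

/-- Ψ = y(∂²/∂u² + ∂²/∂v²). -/
def PsiOp (f : ℂ × ℂ → ℂ) (p : ℂ × ℂ) : ℂ :=
  (p.1.im : ℂ) * (pu (pu f) p + pv (pv f) p)

/-- D₁ = 2y² ∂³/∂x∂u∂v − y² (∂/∂y)(∂²/∂u² − ∂²/∂v²) + (v ∂/∂v + 1)Ψ. -/
def D1op (f : ℂ × ℂ → ℂ) (p : ℂ × ℂ) : ℂ :=
  2 * ((p.1.im : ℂ))^2 * px (fun q => pu (pv f) q) p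
  - ((p.1.im : ℂ))^2 * py (fun q => pu (pu f) q - pv (pv f) q) p
  + ((p.2.im : ℂ) * pv (PsiOp f) p + PsiOp f p)

/-- D₂ = y² (∂/∂x)(∂²/∂v² − ∂²/∂u²) − 2y² ∂³/∂y∂u∂v − v (∂/∂u)Ψ. -/
def D2op (f : ℂ × ℂ → ℂ) (p : ℂ × ℂ) : ℂ :=
  ((p.1.im : ℂ))^2 * px (fun q => pv (pv f) q - pu (pu f) q) p
  - 2 * ((p.1.im : ℂ))^2 * py (fun q => pu (pv f) q) p
  - (p.2.im : ℂ) * pu (PsiOp f) p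

/-- The Siegel-Jacobi space 𝐇₁ × ℂ (τ in the upper half plane). -/
def HJ11 : Set (ℂ × ℂ) := {p | 0 < p.1.im}

/-! ### Infrastructure -/

def dd (w : ℂ × ℂ) (g : ℂ × ℂ → ℂ) (q : ℂ × ℂ) : ℂ := fderiv ℝ g q w

def E1 : ℂ × ℂ := (1, 0)
def E2 : ℂ × ℂ := (Complex.I, 0)
def E3 : ℂ × ℂ := (0, 1)
def E4 : ℂ × ℂ := (0, Complex.I)

def Lc1 : (ℂ × ℂ) →L[ℝ] ℂ :=
  Complex.ofRealCLM.comp (Complex.imCLM.comp (ContinuousLinearMap.fst ℝ ℂ ℂ))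
def Lc2 : (ℂ × ℂ) →L[ℝ] ℂ :=
  Complex.ofRealCLM.comp (Complex.imCLM.comp (ContinuousLinearMap.snd ℝ ℂ ℂ))

lemma HJ11_open : IsOpen HJ11 :=
  isOpen_lt continuous_const (Complex.continuous_im.comp continuous_fst)

variable {g h : ℂ × ℂ → ℂ} {q p : ℂ × ℂ} {w w' a b c d : ℂ × ℂ}

lemma diffAt (hg : ContDiffOn ℝ (⊤ : ℕ∞) g HJ11) (hq : q ∈ HJ11) : DifferentiableAt ℝ g q :=
  (hg.contDiffAt (HJ11_open.mem_nhds hq)).differentiableAt (by simp)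

lemma contDiffOn_dd (hg : ContDiffOn ℝ (⊤ : ℕ∞) g HJ11) (w : ℂ × ℂ) :
    ContDiffOn ℝ (⊤ : ℕ∞) (dd w g) HJ11 := by
  have h1 : ContDiffOn ℝ (⊤ : ℕ∞) (fderiv ℝ g) HJ11 := hg.fderiv_of_isOpen HJ11_open (by simp)
  exact h1.clm_apply contDiffOn_const

lemma contDiffOn_Lc1 : ContDiffOn ℝ (⊤ : ℕ∞) (fun q : ℂ × ℂ => Lc1 q) HJ11 := Lc1.contDiff.contDiffOn
lemma contDiffOn_Lc2 : ContDiffOn ℝ (⊤ : ℕ∞) (fun q : ℂ × ℂ => Lc2 q) HJ11 := Lc2.contDiff.contDiffOn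

lemma dd_add (hg : ContDiffOn ℝ (⊤ : ℕ∞) g HJ11) (hh : ContDiffOn ℝ (⊤ : ℕ∞) h HJ11)
    (hq : q ∈ HJ11) (w : ℂ × ℂ) :
    dd w (fun x => g x + h x) q = dd w g q + dd w h q := by
  unfold dd; rw [fderiv_fun_add (diffAt hg hq) (diffAt hh hq)]; rfl

lemma dd_sub (hg : ContDiffOn ℝ (⊤ : ℕ∞) g HJ11) (hh : ContDiffOn ℝ (⊤ : ℕ∞) h HJ11)
    (hq : q ∈ HJ11) (w : ℂ × ℂ) :
    dd w (fun x => g x - h x) q = dd w g q - dd w h q := by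
  unfold dd; rw [fderiv_fun_sub (diffAt hg hq) (diffAt hh hq)]; rfl

lemma dd_mul (hg : ContDiffOn ℝ (⊤ : ℕ∞) g HJ11) (hh : ContDiffOn ℝ (⊤ : ℕ∞) h HJ11)
    (hq : q ∈ HJ11) (w : ℂ × ℂ) :
    dd w (fun x => g x * h x) q = dd w g q * h q + g q * dd w h q := by
  unfold dd; rw [fderiv_fun_mul (diffAt hg hq) (diffAt hh hq)]
  simp [smul_eq_mul]; ring

lemma dd_congr (hgh : ∀ x ∈ HJ11, g x = h x) (hq : q ∈ HJ11) (w : ℂ × ℂ) :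
    dd w g q = dd w h q := by
  unfold dd
  rw [Filter.EventuallyEq.fderiv_eq (Filter.eventuallyEq_of_mem (HJ11_open.mem_nhds hq) hgh)]

lemma dd_swap (hg : ContDiffOn ℝ (⊤ : ℕ∞) g HJ11) (hq : q ∈ HJ11) (a b : ℂ × ℂ) :
    dd a (dd b g) q = dd b (dd a g) q := by
  have hg' : ContDiffOn ℝ (⊤ : ℕ∞) (fderiv ℝ g) HJ11 := hg.fderiv_of_isOpen HJ11_open (by simp)
  have hd : DifferentiableAt ℝ (fderiv ℝ g) q :=
    (hg'.contDiffAt (HJ11_open.mem_nhds hq)).differentiableAt (by simp)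
  have key : ∀ v w : ℂ × ℂ, fderiv ℝ (fderiv ℝ g) q v w = fderiv ℝ (fderiv ℝ g) q w v := by
    intro v w
    apply second_derivative_symmetric_of_eventually (f := g) (f' := fderiv ℝ g)
    · filter_upwards [HJ11_open.mem_nhds hq] with y hy
      exact (diffAt hg hy).hasFDerivAt
    · exact hd.hasFDerivAt
  have expand : ∀ cc dd' : ℂ × ℂ, dd cc (dd dd' g) q = fderiv ℝ (fderiv ℝ g) q cc dd' := by
    intro cc dd'
    unfold dd
    rw [show (fun x => fderiv ℝ g x dd') = fun x => (fderiv ℝ g x) ((fun _ => dd') x) from rfl]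
    rw [fderiv_clm_apply hd (differentiableAt_const dd')]
    simp
  rw [expand, expand, key]

lemma dd_const (cc : ℂ) (w q : ℂ × ℂ) : dd w (fun _ => cc) q = 0 := by
  unfold dd; rw [fderiv_fun_const]; rfl

lemma dd_Lc1 (w q : ℂ × ℂ) : dd w (fun x => Lc1 x) q = ((w.1.im : ℝ) : ℂ) := by
  unfold dd
  rw [show (fun x : ℂ × ℂ => Lc1 x) = ⇑Lc1 from rfl, Lc1.fderiv]; rfl

lemma dd_Lc2 (w q : ℂ × ℂ) : dd w (fun x => Lc2 x) q = ((w.2.im : ℝ) : ℂ) := by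
  unfold dd
  rw [show (fun x : ℂ × ℂ => Lc2 x) = ⇑Lc2 from rfl, Lc2.fderiv]; rfl

/-- First-order Leibniz for `Lc1 * g`. -/
lemma dd_Lc1_mul (hg : ContDiffOn ℝ (⊤ : ℕ∞) g HJ11) (hq : q ∈ HJ11) (w : ℂ × ℂ) :
    dd w (fun x => Lc1 x * g x) q = ((w.1.im : ℝ) : ℂ) * g q + Lc1 q * dd w g q := by
  calc dd w (fun x => Lc1 x * g x) q
      = dd w (fun x => Lc1 x) q * g q + Lc1 q * dd w g q := dd_mul contDiffOn_Lc1 hg hq w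
    _ = _ := by rw [dd_Lc1]

lemma dd_Lc2_mul (hg : ContDiffOn ℝ (⊤ : ℕ∞) g HJ11) (hq : q ∈ HJ11) (w : ℂ × ℂ) :
    dd w (fun x => Lc2 x * g x) q = ((w.2.im : ℝ) : ℂ) * g q + Lc2 q * dd w g q := by
  calc dd w (fun x => Lc2 x * g x) q
      = dd w (fun x => Lc2 x) q * g q + Lc2 q * dd w g q := dd_mul contDiffOn_Lc2 hg hq w
    _ = _ := by rw [dd_Lc2]

lemma dd_cmul (cc : ℂ) (hg : ContDiffOn ℝ (⊤ : ℕ∞) g HJ11) (hq : q ∈ HJ11) (w : ℂ × ℂ) :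
    dd w (fun x => cc * g x) q = cc * dd w g q := by
  calc dd w (fun x => cc * g x) q
      = dd w (fun _ => cc) q * g q + cc * dd w g q := dd_mul contDiffOn_const hg hq w
    _ = cc * dd w g q := by rw [dd_const]; ring

/-- Second-order Leibniz for `Lc1 * g`. -/
lemma dd2_Lc1_mul (hg : ContDiffOn ℝ (⊤ : ℕ∞) g HJ11) (hp : p ∈ HJ11) (w w' : ℂ × ℂ) :
    dd w' (dd w (fun x => Lc1 x * g x)) p =
      ((w.1.im : ℝ) : ℂ) * dd w' g p + ((w'.1.im : ℝ) : ℂ) * dd w g p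
        + Lc1 p * dd w' (dd w g) p := by
  calc dd w' (dd w (fun x => Lc1 x * g x)) p
      = dd w' (fun x => ((w.1.im : ℝ) : ℂ) * g x + Lc1 x * dd w g x) p :=
        dd_congr (fun x hx => dd_Lc1_mul hg hx w) hp w'
    _ = dd w' (fun x => ((w.1.im : ℝ) : ℂ) * g x) p + dd w' (fun x => Lc1 x * dd w g x) p :=
        dd_add (contDiffOn_const.mul hg) (contDiffOn_Lc1.mul (contDiffOn_dd hg w)) hp w'
    _ = ((w.1.im : ℝ) : ℂ) * dd w' g p
          + (((w'.1.im : ℝ) : ℂ) * dd w g p + Lc1 p * dd w' (dd w g) p) := by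
        rw [dd_cmul _ hg hp w', dd_Lc1_mul (contDiffOn_dd hg w) hp w']
    _ = _ := by ring

lemma dd2_Lc2_mul (hg : ContDiffOn ℝ (⊤ : ℕ∞) g HJ11) (hp : p ∈ HJ11) (w w' : ℂ × ℂ) :
    dd w' (dd w (fun x => Lc2 x * g x)) p =
      ((w.2.im : ℝ) : ℂ) * dd w' g p + ((w'.2.im : ℝ) : ℂ) * dd w g p
        + Lc2 p * dd w' (dd w g) p := by
  calc dd w' (dd w (fun x => Lc2 x * g x)) p
      = dd w' (fun x => ((w.2.im : ℝ) : ℂ) * g x + Lc2 x * dd w g x) p :=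
        dd_congr (fun x hx => dd_Lc2_mul hg hx w) hp w'
    _ = dd w' (fun x => ((w.2.im : ℝ) : ℂ) * g x) p + dd w' (fun x => Lc2 x * dd w g x) p :=
        dd_add (contDiffOn_const.mul hg) (contDiffOn_Lc2.mul (contDiffOn_dd hg w)) hp w'
    _ = ((w.2.im : ℝ) : ℂ) * dd w' g p
          + (((w'.2.im : ℝ) : ℂ) * dd w g p + Lc2 p * dd w' (dd w g) p) := by
        rw [dd_cmul _ hg hp w', dd_Lc2_mul (contDiffOn_dd hg w) hp w']
    _ = _ := by ring

lemma dd2_cmul (cc : ℂ) (hg : ContDiffOn ℝ (⊤ : ℕ∞) g HJ11) (hp : p ∈ HJ11) (w w' : ℂ × ℂ) :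
    dd w' (dd w (fun x => cc * g x)) p = cc * dd w' (dd w g) p := by
  calc dd w' (dd w (fun x => cc * g x)) p
      = dd w' (fun x => cc * dd w g x) p := dd_congr (fun x hx => dd_cmul cc hg hx w) hp w'
    _ = cc * dd w' (dd w g) p := dd_cmul cc (contDiffOn_dd hg w) hp w'

lemma dd2_add (hg : ContDiffOn ℝ (⊤ : ℕ∞) g HJ11) (hh : ContDiffOn ℝ (⊤ : ℕ∞) h HJ11)
    (hp : p ∈ HJ11) (w w' : ℂ × ℂ) :
    dd w' (dd w (fun x => g x + h x)) p = dd w' (dd w g) p + dd w' (dd w h) p := by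
  calc dd w' (dd w (fun x => g x + h x)) p
      = dd w' (fun x => dd w g x + dd w h x) p :=
        dd_congr (fun x hx => dd_add hg hh hx w) hp w'
    _ = _ := dd_add (contDiffOn_dd hg w) (contDiffOn_dd hh w) hp w'

/-- Swap the two outer derivatives in a triple. -/
lemma swap3 {f : ℂ × ℂ → ℂ} (hf : ContDiffOn ℝ (⊤ : ℕ∞) f HJ11) (hp : p ∈ HJ11) (a b c : ℂ × ℂ) :
    dd a (dd b (dd c f)) p = dd b (dd a (dd c f)) p :=
  dd_swap (contDiffOn_dd hf c) hp a b

/-- Swap the two inner derivatives in a triple. -/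
lemma swap3' {f : ℂ × ℂ → ℂ} (hf : ContDiffOn ℝ (⊤ : ℕ∞) f HJ11) (hp : p ∈ HJ11) (a b c : ℂ × ℂ) :
    dd a (dd b (dd c f)) p = dd a (dd c (dd b f)) p :=
  dd_congr (fun x hx => dd_swap hf hx b c) hp a

/-- Pairwise block swap in a quadruple. -/
lemma swap22 {f : ℂ × ℂ → ℂ} (hf : ContDiffOn ℝ (⊤ : ℕ∞) f HJ11) (hp : p ∈ HJ11)
    (a b c d : ℂ × ℂ) :
    dd a (dd b (dd c (dd d f))) p = dd c (dd d (dd a (dd b f))) p := by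
  calc dd a (dd b (dd c (dd d f))) p
      = dd a (dd c (dd b (dd d f))) p :=
        dd_congr (fun x hx => dd_swap (contDiffOn_dd hf d) hx b c) hp a
    _ = dd c (dd a (dd b (dd d f))) p :=
        dd_swap (contDiffOn_dd (contDiffOn_dd hf d) b) hp a c
    _ = dd c (dd a (dd d (dd b f))) p :=
        dd_congr (fun x hx => dd_congr (fun y hy => dd_swap hf hy b d) hx a) hp c
    _ = dd c (dd d (dd a (dd b f))) p :=
        dd_congr (fun x hx => dd_swap (contDiffOn_dd hf b) hx a d) hp c

/-! ### The combined functions -/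

def gz (f : ℂ × ℂ → ℂ) : ℂ × ℂ → ℂ := fun q => dd E3 (dd E3 f) q + dd E4 (dd E4 f) q
def h1z (f : ℂ × ℂ → ℂ) : ℂ × ℂ → ℂ := fun q => dd E1 (dd E1 f) q + dd E2 (dd E2 f) q
def h2z (f : ℂ × ℂ → ℂ) : ℂ × ℂ → ℂ := fun q => dd E1 (dd E3 f) q + dd E2 (dd E4 f) q

@[simp] lemma E1_im1 : ((E1.1.im : ℝ) : ℂ) = 0 := by simp [E1]
@[simp] lemma E2_im1 : ((E2.1.im : ℝ) : ℂ) = 1 := by simp [E2]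
@[simp] lemma E3_im1 : ((E3.1.im : ℝ) : ℂ) = 0 := by simp [E3]
@[simp] lemma E4_im1 : ((E4.1.im : ℝ) : ℂ) = 0 := by simp [E4]
@[simp] lemma E1_im2 : ((E1.2.im : ℝ) : ℂ) = 0 := by simp [E1]
@[simp] lemma E2_im2 : ((E2.2.im : ℝ) : ℂ) = 0 := by simp [E2]
@[simp] lemma E3_im2 : ((E3.2.im : ℝ) : ℂ) = 0 := by simp [E3]
@[simp] lemma E4_im2 : ((E4.2.im : ℝ) : ℂ) = 1 := by simp [E4]

theorem commutator_D_Psi (f : ℂ × ℂ → ℂ) (hf : ContDiffOn ℝ (⊤ : ℕ∞) f HJ11)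
    (p : ℂ × ℂ) (hp : p ∈ HJ11) :
    Dop (PsiOp f) p - PsiOp (Dop f) p =
      2 * ((p.1.im : ℂ))^2 * py (fun q => pu (pu f) q - pv (pv f) q) p
      - 4 * ((p.1.im : ℂ))^2 * px (fun q => pu (pv f) q) p
      - 2 * ((p.2.im : ℂ) * pv (PsiOp f) p + PsiOp f p) := by
  -- smoothness bookkeeping
  have s1 : ContDiffOn ℝ (⊤ : ℕ∞) (dd E1 f) HJ11 := contDiffOn_dd hf E1
  have s2 : ContDiffOn ℝ (⊤ : ℕ∞) (dd E2 f) HJ11 := contDiffOn_dd hf E2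
  have s3 : ContDiffOn ℝ (⊤ : ℕ∞) (dd E3 f) HJ11 := contDiffOn_dd hf E3
  have s4 : ContDiffOn ℝ (⊤ : ℕ∞) (dd E4 f) HJ11 := contDiffOn_dd hf E4
  have s11 : ContDiffOn ℝ (⊤ : ℕ∞) (dd E1 (dd E1 f)) HJ11 := contDiffOn_dd s1 E1
  have s22 : ContDiffOn ℝ (⊤ : ℕ∞) (dd E2 (dd E2 f)) HJ11 := contDiffOn_dd s2 E2
  have s33 : ContDiffOn ℝ (⊤ : ℕ∞) (dd E3 (dd E3 f)) HJ11 := contDiffOn_dd s3 E3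
  have s44 : ContDiffOn ℝ (⊤ : ℕ∞) (dd E4 (dd E4 f)) HJ11 := contDiffOn_dd s4 E4
  have s13 : ContDiffOn ℝ (⊤ : ℕ∞) (dd E1 (dd E3 f)) HJ11 := contDiffOn_dd s3 E1
  have s24 : ContDiffOn ℝ (⊤ : ℕ∞) (dd E2 (dd E4 f)) HJ11 := contDiffOn_dd s4 E2
  have sg : ContDiffOn ℝ (⊤ : ℕ∞) (gz f) HJ11 := s33.add s44
  have sh1 : ContDiffOn ℝ (⊤ : ℕ∞) (h1z f) HJ11 := s11.add s22
  have sh2 : ContDiffOn ℝ (⊤ : ℕ∞) (h2z f) HJ11 := s13.add s24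
  have sk2 : ContDiffOn ℝ (⊤ : ℕ∞) (fun q => (2:ℂ) * h2z f q) HJ11 := contDiffOn_const.mul sh2
  -- second derivatives of Ψf = Lc1 * gz f
  have e11 : dd E1 (dd E1 (PsiOp f)) p = Lc1 p * dd E1 (dd E1 (gz f)) p := by
    have e := dd2_Lc1_mul sg hp E1 E1; simp at e; exact e
  have e22 : dd E2 (dd E2 (PsiOp f)) p =
      dd E2 (gz f) p + dd E2 (gz f) p + Lc1 p * dd E2 (dd E2 (gz f)) p := by
    have e := dd2_Lc1_mul sg hp E2 E2; simp at e; exact e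
  have e33 : dd E3 (dd E3 (PsiOp f)) p = Lc1 p * dd E3 (dd E3 (gz f)) p := by
    have e := dd2_Lc1_mul sg hp E3 E3; simp at e; exact e
  have e44 : dd E4 (dd E4 (PsiOp f)) p = Lc1 p * dd E4 (dd E4 (gz f)) p := by
    have e := dd2_Lc1_mul sg hp E4 E4; simp at e; exact e
  have e13 : dd E1 (dd E3 (PsiOp f)) p = Lc1 p * dd E1 (dd E3 (gz f)) p := by
    have e := dd2_Lc1_mul sg hp E3 E1; simp at e; exact e
  have e24 : dd E2 (dd E4 (PsiOp f)) p =
      dd E4 (gz f) p + Lc1 p * dd E2 (dd E4 (gz f)) p := by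
    have e := dd2_Lc1_mul sg hp E4 E2; simp at e; exact e
  -- Dop applied to Ψf
  have HL : Dop (PsiOp f) p =
      Lc1 p^2 * (Lc1 p * dd E1 (dd E1 (gz f)) p
        + (dd E2 (gz f) p + dd E2 (gz f) p + Lc1 p * dd E2 (dd E2 (gz f)) p))
      + Lc2 p^2 * (Lc1 p * dd E3 (dd E3 (gz f)) p + Lc1 p * dd E4 (dd E4 (gz f)) p)
      + 2 * Lc1 p * Lc2 p * (Lc1 p * dd E1 (dd E3 (gz f)) p
        + (dd E4 (gz f) p + Lc1 p * dd E2 (dd E4 (gz f)) p)) := by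
    have h0 : Dop (PsiOp f) p =
        Lc1 p^2 * (dd E1 (dd E1 (PsiOp f)) p + dd E2 (dd E2 (PsiOp f)) p)
        + Lc2 p^2 * (dd E3 (dd E3 (PsiOp f)) p + dd E4 (dd E4 (PsiOp f)) p)
        + 2 * Lc1 p * Lc2 p * (dd E1 (dd E3 (PsiOp f)) p + dd E2 (dd E4 (PsiOp f)) p) := rfl
    rw [h0, e11, e22, e33, e44, e13, e24]
  -- Dop f in product form
  have Dop_eq : Dop f = fun q => Lc1 q * (Lc1 q * h1z f q)
      + (Lc2 q * (Lc2 q * gz f q) + Lc1 q * (Lc2 q * ((2:ℂ) * h2z f q))) := by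
    funext q
    show Lc1 q^2 * (dd E1 (dd E1 f) q + dd E2 (dd E2 f) q)
        + Lc2 q^2 * (dd E3 (dd E3 f) q + dd E4 (dd E4 f) q)
        + 2 * Lc1 q * Lc2 q * (dd E1 (dd E3 f) q + dd E2 (dd E4 f) q) = _
    simp only [gz, h1z, h2z]
    ring
  have sF1 : ContDiffOn ℝ (⊤ : ℕ∞) (fun q => Lc1 q * h1z f q) HJ11 := contDiffOn_Lc1.mul sh1
  have sF1' : ContDiffOn ℝ (⊤ : ℕ∞) (fun q => Lc1 q * (Lc1 q * h1z f q)) HJ11 := contDiffOn_Lc1.mul sF1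
  have sG2 : ContDiffOn ℝ (⊤ : ℕ∞) (fun q => Lc2 q * gz f q) HJ11 := contDiffOn_Lc2.mul sg
  have sF2 : ContDiffOn ℝ (⊤ : ℕ∞) (fun q => Lc2 q * (Lc2 q * gz f q)) HJ11 := contDiffOn_Lc2.mul sG2
  have sG3 : ContDiffOn ℝ (⊤ : ℕ∞) (fun q => Lc2 q * ((2:ℂ) * h2z f q)) HJ11 := contDiffOn_Lc2.mul sk2
  have sF3 : ContDiffOn ℝ (⊤ : ℕ∞) (fun q => Lc1 q * (Lc2 q * ((2:ℂ) * h2z f q))) HJ11 :=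
    contDiffOn_Lc1.mul sG3
  have sF23 : ContDiffOn ℝ (⊤ : ℕ∞)
      (fun q => Lc2 q * (Lc2 q * gz f q) + Lc1 q * (Lc2 q * ((2:ℂ) * h2z f q))) HJ11 :=
    sF2.add sF3
  -- T1 pieces
  have a1 : dd E3 (dd E3 (fun x => Lc1 x * (Lc1 x * h1z f x))) p
      = Lc1 p * dd E3 (dd E3 (fun x => Lc1 x * h1z f x)) p := by
    simpa using dd2_Lc1_mul sF1 hp E3 E3
  have a2 : dd E3 (dd E3 (fun x => Lc1 x * h1z f x)) p = Lc1 p * dd E3 (dd E3 (h1z f)) p := by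
    simpa using dd2_Lc1_mul sh1 hp E3 E3
  have a3 : dd E4 (dd E4 (fun x => Lc1 x * (Lc1 x * h1z f x))) p
      = Lc1 p * dd E4 (dd E4 (fun x => Lc1 x * h1z f x)) p := by
    simpa using dd2_Lc1_mul sF1 hp E4 E4
  have a4 : dd E4 (dd E4 (fun x => Lc1 x * h1z f x)) p = Lc1 p * dd E4 (dd E4 (h1z f)) p := by
    simpa using dd2_Lc1_mul sh1 hp E4 E4
  -- T2 pieces
  have b1 : dd E3 (dd E3 (fun x => Lc2 x * (Lc2 x * gz f x))) p
      = Lc2 p * dd E3 (dd E3 (fun x => Lc2 x * gz f x)) p := by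
    simpa using dd2_Lc2_mul sG2 hp E3 E3
  have b2 : dd E3 (dd E3 (fun x => Lc2 x * gz f x)) p = Lc2 p * dd E3 (dd E3 (gz f)) p := by
    simpa using dd2_Lc2_mul sg hp E3 E3
  have b3 : dd E4 (dd E4 (fun x => Lc2 x * (Lc2 x * gz f x))) p
      = dd E4 (fun x => Lc2 x * gz f x) p + dd E4 (fun x => Lc2 x * gz f x) p
        + Lc2 p * dd E4 (dd E4 (fun x => Lc2 x * gz f x)) p := by
    simpa using dd2_Lc2_mul sG2 hp E4 E4
  have b5 : dd E4 (dd E4 (fun x => Lc2 x * gz f x)) p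
      = dd E4 (gz f) p + dd E4 (gz f) p + Lc2 p * dd E4 (dd E4 (gz f)) p := by
    simpa using dd2_Lc2_mul sg hp E4 E4
  have b4 : dd E4 (fun x => Lc2 x * gz f x) p = gz f p + Lc2 p * dd E4 (gz f) p := by
    simpa using dd_Lc2_mul sg hp E4
  -- T3 pieces
  have c1 : dd E3 (dd E3 (fun x => Lc1 x * (Lc2 x * ((2:ℂ) * h2z f x)))) p
      = Lc1 p * dd E3 (dd E3 (fun x => Lc2 x * ((2:ℂ) * h2z f x))) p := by
    simpa using dd2_Lc1_mul sG3 hp E3 E3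
  have c2 : dd E3 (dd E3 (fun x => Lc2 x * ((2:ℂ) * h2z f x))) p
      = Lc2 p * dd E3 (dd E3 (fun x => (2:ℂ) * h2z f x)) p := by
    simpa using dd2_Lc2_mul sk2 hp E3 E3
  have c3 : dd E3 (dd E3 (fun x => (2:ℂ) * h2z f x)) p = 2 * dd E3 (dd E3 (h2z f)) p :=
    dd2_cmul 2 sh2 hp E3 E3
  have c4 : dd E4 (dd E4 (fun x => Lc1 x * (Lc2 x * ((2:ℂ) * h2z f x)))) p
      = Lc1 p * dd E4 (dd E4 (fun x => Lc2 x * ((2:ℂ) * h2z f x))) p := by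
    simpa using dd2_Lc1_mul sG3 hp E4 E4
  have c5 : dd E4 (dd E4 (fun x => Lc2 x * ((2:ℂ) * h2z f x))) p
      = dd E4 (fun x => (2:ℂ) * h2z f x) p + dd E4 (fun x => (2:ℂ) * h2z f x) p
        + Lc2 p * dd E4 (dd E4 (fun x => (2:ℂ) * h2z f x)) p := by
    simpa using dd2_Lc2_mul sk2 hp E4 E4
  have c6 : dd E4 (fun x => (2:ℂ) * h2z f x) p = 2 * dd E4 (h2z f) p := dd_cmul 2 sh2 hp E4
  have c7 : dd E4 (dd E4 (fun x => (2:ℂ) * h2z f x)) p = 2 * dd E4 (dd E4 (h2z f)) p :=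
    dd2_cmul 2 sh2 hp E4 E4
  -- splitting the sum
  have split3 : dd E3 (dd E3 (Dop f)) p
      = dd E3 (dd E3 (fun x => Lc1 x * (Lc1 x * h1z f x))) p
        + (dd E3 (dd E3 (fun x => Lc2 x * (Lc2 x * gz f x))) p
          + dd E3 (dd E3 (fun x => Lc1 x * (Lc2 x * ((2:ℂ) * h2z f x)))) p) := by
    rw [Dop_eq, dd2_add sF1' sF23 hp E3 E3, dd2_add sF2 sF3 hp E3 E3]
  have split4 : dd E4 (dd E4 (Dop f)) p
      = dd E4 (dd E4 (fun x => Lc1 x * (Lc1 x * h1z f x))) p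
        + (dd E4 (dd E4 (fun x => Lc2 x * (Lc2 x * gz f x))) p
          + dd E4 (dd E4 (fun x => Lc1 x * (Lc2 x * ((2:ℂ) * h2z f x)))) p) := by
    rw [Dop_eq, dd2_add sF1' sF23 hp E4 E4, dd2_add sF2 sF3 hp E4 E4]
  have u3 : dd E3 (dd E3 (Dop f)) p
      = Lc1 p * (Lc1 p * dd E3 (dd E3 (h1z f)) p)
        + (Lc2 p * (Lc2 p * dd E3 (dd E3 (gz f)) p)
          + Lc1 p * (Lc2 p * (2 * dd E3 (dd E3 (h2z f)) p))) := by
    rw [split3, a1, a2, b1, b2, c1, c2, c3]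
  have u4 : dd E4 (dd E4 (Dop f)) p
      = Lc1 p * (Lc1 p * dd E4 (dd E4 (h1z f)) p)
        + ((gz f p + Lc2 p * dd E4 (gz f) p) + (gz f p + Lc2 p * dd E4 (gz f) p)
            + Lc2 p * (dd E4 (gz f) p + dd E4 (gz f) p + Lc2 p * dd E4 (dd E4 (gz f)) p)
          + Lc1 p * (2 * dd E4 (h2z f) p + 2 * dd E4 (h2z f) p
            + Lc2 p * (2 * dd E4 (dd E4 (h2z f)) p))) := by
    rw [split4, a3, a4, b3, b5, b4, c4, c5, c6, c7]
  have HR : PsiOp (Dop f) p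
      = Lc1 p * (dd E3 (dd E3 (Dop f)) p + dd E4 (dd E4 (Dop f)) p) := rfl
  -- expansions of gz/h1z/h2z derivatives into f-chains
  have x11 : dd E1 (dd E1 (gz f)) p
      = dd E1 (dd E1 (dd E3 (dd E3 f))) p + dd E1 (dd E1 (dd E4 (dd E4 f))) p :=
    dd2_add s33 s44 hp E1 E1
  have x22 : dd E2 (dd E2 (gz f)) p
      = dd E2 (dd E2 (dd E3 (dd E3 f))) p + dd E2 (dd E2 (dd E4 (dd E4 f))) p :=
    dd2_add s33 s44 hp E2 E2
  have x13 : dd E1 (dd E3 (gz f)) p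
      = dd E1 (dd E3 (dd E3 (dd E3 f))) p + dd E1 (dd E3 (dd E4 (dd E4 f))) p :=
    dd2_add s33 s44 hp E3 E1
  have x24 : dd E2 (dd E4 (gz f)) p
      = dd E2 (dd E4 (dd E3 (dd E3 f))) p + dd E2 (dd E4 (dd E4 (dd E4 f))) p :=
    dd2_add s33 s44 hp E4 E2
  have xB2 : dd E2 (gz f) p
      = dd E2 (dd E3 (dd E3 f)) p + dd E2 (dd E4 (dd E4 f)) p := dd_add s33 s44 hp E2
  have y33 : dd E3 (dd E3 (h1z f)) p
      = dd E3 (dd E3 (dd E1 (dd E1 f))) p + dd E3 (dd E3 (dd E2 (dd E2 f))) p :=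
    dd2_add s11 s22 hp E3 E3
  have y44 : dd E4 (dd E4 (h1z f)) p
      = dd E4 (dd E4 (dd E1 (dd E1 f))) p + dd E4 (dd E4 (dd E2 (dd E2 f))) p :=
    dd2_add s11 s22 hp E4 E4
  have z33 : dd E3 (dd E3 (h2z f)) p
      = dd E3 (dd E3 (dd E1 (dd E3 f))) p + dd E3 (dd E3 (dd E2 (dd E4 f))) p :=
    dd2_add s13 s24 hp E3 E3
  have z44 : dd E4 (dd E4 (h2z f)) p
      = dd E4 (dd E4 (dd E1 (dd E3 f))) p + dd E4 (dd E4 (dd E2 (dd E4 f))) p :=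
    dd2_add s13 s24 hp E4 E4
  have zB4 : dd E4 (h2z f) p
      = dd E4 (dd E1 (dd E3 f)) p + dd E4 (dd E2 (dd E4 f)) p := dd_add s13 s24 hp E4
  -- Schwarz swaps
  have w1 : dd E3 (dd E3 (dd E1 (dd E1 f))) p = dd E1 (dd E1 (dd E3 (dd E3 f))) p :=
    swap22 hf hp E3 E3 E1 E1
  have w2 : dd E3 (dd E3 (dd E2 (dd E2 f))) p = dd E2 (dd E2 (dd E3 (dd E3 f))) p :=
    swap22 hf hp E3 E3 E2 E2
  have w3 : dd E4 (dd E4 (dd E1 (dd E1 f))) p = dd E1 (dd E1 (dd E4 (dd E4 f))) p :=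
    swap22 hf hp E4 E4 E1 E1
  have w4 : dd E4 (dd E4 (dd E2 (dd E2 f))) p = dd E2 (dd E2 (dd E4 (dd E4 f))) p :=
    swap22 hf hp E4 E4 E2 E2
  have w5 : dd E3 (dd E3 (dd E1 (dd E3 f))) p = dd E1 (dd E3 (dd E3 (dd E3 f))) p :=
    swap22 hf hp E3 E3 E1 E3
  have w6 : dd E3 (dd E3 (dd E2 (dd E4 f))) p = dd E2 (dd E4 (dd E3 (dd E3 f))) p :=
    swap22 hf hp E3 E3 E2 E4
  have w7 : dd E4 (dd E4 (dd E1 (dd E3 f))) p = dd E1 (dd E3 (dd E4 (dd E4 f))) p :=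
    swap22 hf hp E4 E4 E1 E3
  have w8 : dd E4 (dd E4 (dd E2 (dd E4 f))) p = dd E2 (dd E4 (dd E4 (dd E4 f))) p :=
    swap22 hf hp E4 E4 E2 E4
  have w9 : dd E4 (dd E2 (dd E4 f)) p = dd E2 (dd E4 (dd E4 f)) p := swap3 hf hp E4 E2 E4
  have w10 : dd E4 (dd E1 (dd E3 f)) p = dd E1 (dd E3 (dd E4 f)) p := by
    rw [swap3 hf hp E4 E1 E3, swap3' hf hp E1 E4 E3]
  -- right-hand side pieces
  have hR1 : py (fun q => pu (pu f) q - pv (pv f) q) p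
      = dd E2 (dd E3 (dd E3 f)) p - dd E2 (dd E4 (dd E4 f)) p := dd_sub s33 s44 hp E2
  have hR2 : px (fun q => pu (pv f) q) p = dd E1 (dd E3 (dd E4 f)) p := rfl
  have hR3 : pv (PsiOp f) p = Lc1 p * dd E4 (gz f) p := by
    have e := dd_Lc1_mul sg hp E4; simp at e; exact e
  have hR4 : PsiOp f p = Lc1 p * gz f p := rfl
  have hY : ((p.1.im : ℝ) : ℂ) = Lc1 p := rfl
  have hV : ((p.2.im : ℝ) : ℂ) = Lc2 p := rfl
  rw [HL, HR, u3, u4, hR1, hR2, hR3, hR4, hY, hV,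
    xB2, x11, x22, x13, x24, y33, y44, z33, z44, zB4,
    w1, w2, w3, w4, w5, w6, w7, w8, w9, w10]
  ring
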